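/- arXiv:1705.06443 — 5 statements merged into one kernel-verified Lean document; each statement's English description precedes it below -/
import Mathlib

section
/- Let E and F be Banach spaces and L : E → F a continuous linear map. Then the image of L is closed in F if and only if there exists a constant c > 0 such that for every y in the image of L there exists x ∈ E with L x = y and ‖y‖ ≥ c ‖x‖. -/
/-! If the range of `L` is closed, it is a Banach space onto which `L` maps surjectively, and the
open mapping theorem provides the bounded preimages. Conversely, bounded preimages say exactly that
the injective map `E ⧸ ker L → F` induced by `L` is antilipschitz, and an antilipschitz map on a
complete space has closed range. -/

open Set

namespace ContinuousLinearMap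

variable {𝕜 E F : Type*} [NontriviallyNormedField 𝕜]
  [NormedAddCommGroup E] [NormedSpace 𝕜 E]
  [NormedAddCommGroup F] [NormedSpace 𝕜 F]

theorem exists_preimage_norm_le_of_isClosed_range [CompleteSpace E] [CompleteSpace F]
    (f : E →L[𝕜] F) (hf : IsClosed (range f)) :
    ∃ C > 0, ∀ y ∈ range f, ∃ x, f x = y ∧ ‖x‖ ≤ C * ‖y‖ := by
  have : CompleteSpace f.range := IsClosed.completeSpace_coe (hs := hf)
  obtain ⟨C, hC, h⟩ := f.rangeRestrict.exists_preimage_norm_le f.surjective_rangeRestrict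
  refine ⟨C, hC, ?_⟩
  rintro y ⟨x₀, rfl⟩
  obtain ⟨x, hx, hle⟩ := h ⟨f x₀, x₀, rfl⟩
  exact ⟨x, congrArg Subtype.val hx, hle⟩

theorem antilipschitz_liftQL_ker_of_preimage_norm_le {C : ℝ} (f : E →L[𝕜] F)
    (h : ∀ y ∈ range f, ∃ x, f x = y ∧ ‖x‖ ≤ C * ‖y‖) :
    AntilipschitzWith C.toNNReal (f.ker.liftQL f le_rfl) := by
  refine AddMonoidHomClass.antilipschitz_of_bound _ fun q => ?_
  obtain ⟨x, rfl⟩ := Submodule.Quotient.mk_surjective _ q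
  obtain ⟨x', hx', hle⟩ := h (f x) ⟨x, rfl⟩
  have hmk : (Submodule.Quotient.mk x : E ⧸ f.ker) = Submodule.Quotient.mk x' :=
    (Submodule.Quotient.eq _).2 (by simp [hx'])
  rw [hmk]
  calc ‖(Submodule.Quotient.mk x' : E ⧸ f.ker)‖
    _ ≤ ‖x'‖ := Submodule.Quotient.norm_mk_le _ _
    _ ≤ C * ‖f x'‖ := hx' ▸ hle
    _ ≤ C.toNNReal * ‖f x'‖ := by gcongr; exact C.le_coe_toNNReal

theorem isClosed_range_of_preimage_norm_le [CompleteSpace E] {C : ℝ} (f : E →L[𝕜] F)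
    (h : ∀ y ∈ range f, ∃ x, f x = y ∧ ‖x‖ ≤ C * ‖y‖) : IsClosed (range f) := by
  have hrange : range (f.ker.liftQL f le_rfl) = range f := by
    rw [← (Submodule.Quotient.mk_surjective _).range_comp]; rfl
  exact hrange ▸ (antilipschitz_liftQL_ker_of_preimage_norm_le f h).isClosed_range
    (f.ker.liftQL f le_rfl).uniformContinuous

end ContinuousLinearMap

theorem stmt0 {E F : Type*} [NormedAddCommGroup E] [NormedSpace ℝ E] [CompleteSpace E]
    [NormedAddCommGroup F] [NormedSpace ℝ F] [CompleteSpace F] (L : E →L[ℝ] F) :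
    IsClosed (Set.range L) ↔
      ∃ c : ℝ, 0 < c ∧ ∀ y ∈ Set.range L, ∃ x : E, L x = y ∧ c * ‖x‖ ≤ ‖y‖ := by
  have hscale {c : ℝ} (hc : 0 < c) (x : E) (y : F) : c * ‖x‖ ≤ ‖y‖ ↔ ‖x‖ ≤ c⁻¹ * ‖y‖ :=
    (le_inv_mul_iff₀ hc).symm
  constructor
  · intro hL
    obtain ⟨C, hC, h⟩ := L.exists_preimage_norm_le_of_isClosed_range hL
    refine ⟨C⁻¹, inv_pos.2 hC, fun y hy => ?_⟩
    simpa only [hscale (inv_pos.2 hC), inv_inv] using h y hy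
  · rintro ⟨c, hc, h⟩
    refine L.isClosed_range_of_preimage_norm_le (C := c⁻¹) fun y hy => ?_
    simpa only [hscale hc] using h y hy
end

section
/- Let Y be a real Banach space, (π_h) a sequence in Y*, (ρ_h) a sequence of nonnegative reals with ρ_h → 0, and suppose π_h → 0 in the weak-star topology. Let K be a nonempty closed convex subset of Y with nonempty relative interior, let a ∈ K, and set S := closure(aff(K)) − a (a closed subspace of Y). If for every y ∈ K there exists c_y ∈ ℝ such that π_h(y) ≤ c_y ρ_h for all h, then the restrictions of π_h to S converge to 0 in the operator norm of S*. -/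
/-!
The sets `{y ∈ K | π_h y ≤ n ρ_h for all h}` are closed and cover the complete space `K`, so by
Baire one of them contains a relative ball `K ∩ B(y₀, δ)`. Pushing `y₀` slightly towards a
relative interior point of `K` and using convexity yields a whole ball `y₁ + (S ∩ B(0, r))` on
which `π_h ≤ C ρ_h`. Hence `|π_h v| ≤ (C ρ_h + |π_h y₁|) / r` on the unit ball of `S`, and
the right-hand side tends to `0` since `ρ_h → 0` and `π_h y₁ → 0`.
-/

open Filter Metric Topology

theorem ContinuousLinearMap.opNorm_le_div_of_forall_closedBall_le {E : Type*}
    [NormedAddCommGroup E] [NormedSpace ℝ E] {r : ℝ} (hr : 0 < r) (c : ℝ) (f : StrongDual ℝ E)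
    (h : ∀ z ∈ closedBall (0 : E) r, f z ≤ c) : ‖f‖ ≤ c / r := by
  refine f.opNorm_bound_of_ball_bound hr c fun z hz => abs_le.2 ⟨?_, h z hz⟩
  have := h (-z) (by simpa using hz)
  rw [map_neg] at this
  linarith

theorem AffineSubspace.vadd_mem_closure_of_mem_topologicalClosure {k V : Type*} [Ring k]
    [AddCommGroup V] [Module k V] [TopologicalSpace V] [ContinuousAdd V]
    [ContinuousConstSMul k V] {P : AffineSubspace k V} {x v : V} (hx : x ∈ P)
    (hv : v ∈ P.direction.topologicalClosure) : v +ᵥ x ∈ closure (P : Set V) :=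
  map_mem_closure (f := fun w : V => w +ᵥ x) (continuous_id.add continuous_const)
    hv fun _ hw => P.vadd_mem_of_mem_direction hw hx

theorem IsClosed.exists_inter_ball_subset_of_subset_iUnion {X : Type*} [MetricSpace X]
    [CompleteSpace X] {K : Set X} (hKc : IsClosed K) (hK : K.Nonempty) {F : ℕ → Set X}
    (hF : ∀ n, IsClosed (F n)) (hcover : K ⊆ ⋃ n, F n) :
    ∃ n, ∃ y ∈ K, ∃ δ > 0, K ∩ ball y δ ⊆ F n := by
  have : CompleteSpace K := hKc.completeSpace_coe
  have : Nonempty K := hK.to_subtype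
  obtain ⟨n, ⟨y, hy⟩⟩ := nonempty_interior_of_iUnion_of_closed
    (f := fun n => ((↑) : K → X) ⁻¹' F n) (fun n => (hF n).preimage continuous_subtype_val)
    (Set.eq_univ_of_forall fun y => by simpa using hcover y.2)
  obtain ⟨δ, hδ, hball⟩ := Metric.isOpen_iff.mp isOpen_interior y hy
  refine ⟨n, y, y.2, δ, hδ, fun z ⟨hzK, hzy⟩ => ?_⟩
  have hz := interior_subset (hball (show (⟨z, hzK⟩ : K) ∈ ball y δ from hzy))
  exact hz

theorem IsClosed.exists_ball_forall_le_mul {X ι : Type*} [MetricSpace X] [CompleteSpace X]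
    {K : Set X} (hKc : IsClosed K) (hK : K.Nonempty) {g : ι → X → ℝ}
    (hg : ∀ i, Continuous (g i)) {ρ : ι → ℝ} (hρ : ∀ i, 0 ≤ ρ i)
    (hdom : ∀ y ∈ K, ∃ c : ℝ, ∀ i, g i y ≤ c * ρ i) :
    ∃ C : ℝ, ∃ y₀ ∈ K, ∃ δ > 0, ∀ y ∈ K, dist y y₀ < δ → ∀ i, g i y ≤ C * ρ i := by
  have hcover : K ⊆ ⋃ n : ℕ, {y | ∀ i, g i y ≤ n * ρ i} := fun y hy => by
    obtain ⟨c, hc⟩ := hdom y hy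
    exact Set.mem_iUnion.2 ⟨⌈c⌉₊, fun i =>
      (hc i).trans (mul_le_mul_of_nonneg_right (Nat.le_ceil c) (hρ i))⟩
  have hclosed (n : ℕ) : IsClosed {y | ∀ i, g i y ≤ n * ρ i} := by
    simp only [Set.ofPred_forall]
    exact isClosed_iInter fun i => _root_.isClosed_le (hg i) continuous_const
  obtain ⟨n, y₀, hy₀, δ, hδ, hsub⟩ :=
    hKc.exists_inter_ball_subset_of_subset_iUnion hK hclosed hcover
  exact ⟨n, y₀, hy₀, δ, hδ, fun y hy hyδ => hsub ⟨hy, hyδ⟩⟩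

theorem Convex.exists_forall_add_mem_near {Y : Type*} [NormedAddCommGroup Y] [NormedSpace ℝ Y]
    {K : Set Y} (hK : Convex ℝ K) {S : Submodule ℝ Y} {x₀ y₀ : Y} {ε δ : ℝ} (hε : 0 < ε)
    (hx₀ : ∀ v ∈ S, ‖v‖ < ε → x₀ + v ∈ K) (hy₀ : y₀ ∈ K) (hδ : 0 < δ) :
    ∃ y₁ : Y, ∃ r > 0, ∀ v ∈ S, ‖v‖ ≤ r → y₁ + v ∈ K ∧ dist (y₁ + v) y₀ < δ := by
  have hseg : Tendsto (fun t : ℝ => y₀ + t • (x₀ - y₀)) (𝓝[>] 0) (𝓝 y₀) :=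
    ((continuous_const.add (continuous_id.smul continuous_const)).tendsto' 0 y₀
      (by simp)).mono_left nhdsWithin_le_nhds
  obtain ⟨t, ⟨ht0, ht1⟩, htδ⟩ :=
    (Eventually.and (Ioo_mem_nhdsGT one_pos) (hseg (ball_mem_nhds y₀ (half_pos hδ)))).exists
  refine ⟨y₀ + t • (x₀ - y₀), min (t * ε / 2) (δ / 2), by positivity, fun v hv hvr => ⟨?_, ?_⟩⟩
  · have hv' : ‖t⁻¹ • v‖ < ε := by
      rw [norm_smul, Real.norm_eq_abs, abs_inv, abs_of_pos ht0, inv_mul_lt_iff₀ ht0]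
      linarith [min_le_left (t * ε / 2) (δ / 2), mul_pos ht0 hε]
    convert hK hy₀ (hx₀ _ (S.smul_mem _ hv) hv') (sub_nonneg.2 ht1.le) ht0.le (by ring) using 1
    rw [smul_add, smul_smul, mul_inv_cancel₀ ht0.ne', one_smul]
    module
  · calc dist (y₀ + t • (x₀ - y₀) + v) y₀
        ≤ dist (y₀ + t • (x₀ - y₀) + v) (y₀ + t • (x₀ - y₀)) + dist (y₀ + t • (x₀ - y₀)) y₀ :=
          dist_triangle _ _ _
      _ < δ / 2 + δ / 2 := by
          rw [dist_self_add_left]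
          exact add_lt_add_of_le_of_lt (hvr.trans (min_le_right _ _)) htδ
      _ = δ := add_halves δ

theorem stmt1_general {Y : Type*} [NormedAddCommGroup Y] [NormedSpace ℝ Y] [CompleteSpace Y]
    (π : ℕ → (Y →L[ℝ] ℝ)) (ρ : ℕ → ℝ) (K : Set Y) (a : Y)
    (hKc : IsClosed K) (hKconv : Convex ℝ K)
    -- nonempty relative interior: some point of K is interior to K
    -- within the closed affine hull of K
    (hri : ∃ x ∈ K, ∃ ε : ℝ, 0 < ε ∧
      ∀ y ∈ closure (affineSpan ℝ K : Set Y), ‖y - x‖ < ε → y ∈ K)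
    (ha : a ∈ K)
    (S : Submodule ℝ Y)
    (hS : S = (Submodule.span ℝ ((fun y => y - a) '' K)).topologicalClosure)
    (hρ0 : ∀ h, 0 ≤ ρ h)
    (hρ : Tendsto ρ atTop (nhds 0))
    (hw : ∀ y : Y, Tendsto (fun h => π h y) atTop (nhds (0 : ℝ)))
    (hdom : ∀ y ∈ K, ∃ c : ℝ, ∀ h : ℕ, π h y ≤ c * ρ h) :
    Tendsto (fun h => ‖(π h).comp (S.subtypeL)‖) atTop (nhds 0) := by
  obtain ⟨x₀, hx₀, ε, hε, hri⟩ := hri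
  have hS_direction : S = (affineSpan ℝ K).direction.topologicalClosure := by
    rw [hS, direction_affineSpan, vectorSpan_eq_span_vsub_set_right ℝ ha]
    rfl
  have hx₀_ball : ∀ v ∈ S, ‖v‖ < ε → x₀ + v ∈ K := fun v hv hvε => by
    refine hri _ ?_ (by simpa using hvε)
    rw [add_comm]
    exact AffineSubspace.vadd_mem_closure_of_mem_topologicalClosure (mem_affineSpan ℝ hx₀)
      (hS_direction ▸ hv)
  obtain ⟨C, y₀, hy₀, δ, hδ, hC⟩ :=
    hKc.exists_ball_forall_le_mul ⟨x₀, hx₀⟩ (fun h => (π h).continuous) hρ0 hdom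
  obtain ⟨y₁, r, hr, hy₁⟩ := hKconv.exists_forall_add_mem_near hε hx₀_ball hy₀ hδ
  have hbound (h : ℕ) : ‖(π h).comp S.subtypeL‖ ≤ (C * ρ h + |π h y₁|) / r :=
    ContinuousLinearMap.opNorm_le_div_of_forall_closedBall_le hr _ _ fun v hv => by
      obtain ⟨hvK, hvδ⟩ := hy₁ v v.2 (mem_closedBall_zero_iff.1 hv)
      have hle := hC _ hvK hvδ h
      rw [map_add] at hle
      change π h v ≤ _
      linarith [neg_abs_le (π h y₁)]
  have hlim : Tendsto (fun h => (C * ρ h + |π h y₁|) / r) atTop (𝓝 0) := by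
    simpa using ((hρ.const_mul C).add (hw y₁).abs).div_const r
  exact squeeze_zero (fun _ => ContinuousLinearMap.opNorm_nonneg _) hbound hlim

theorem stmt1 {Y : Type*} [NormedAddCommGroup Y] [NormedSpace ℝ Y] [CompleteSpace Y]
    (π : ℕ → (Y →L[ℝ] ℝ)) (ρ : ℕ → ℝ) (K : Set Y) (a : Y)
    (hK : K.Nonempty) (hKc : IsClosed K) (hKconv : Convex ℝ K)
    -- nonempty relative interior: some point of K is interior to K
    -- within the closed affine hull of K
    (hri : ∃ x ∈ K, ∃ ε : ℝ, 0 < ε ∧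
      ∀ y ∈ closure (affineSpan ℝ K : Set Y), ‖y - x‖ < ε → y ∈ K)
    (ha : a ∈ K)
    (S : Submodule ℝ Y)
    (hS : S = (Submodule.span ℝ ((fun y => y - a) '' K)).topologicalClosure)
    (hρ0 : ∀ h, 0 ≤ ρ h)
    (hρ : Tendsto ρ atTop (nhds 0))
    (hw : ∀ y : Y, Tendsto (fun h => π h y) atTop (nhds (0 : ℝ)))
    (hdom : ∀ y ∈ K, ∃ c : ℝ, ∀ h : ℕ, π h y ≤ c * ρ h) :
    Tendsto (fun h => ‖(π h).comp (S.subtypeL)‖) atTop (nhds 0) :=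
  stmt1_general π ρ K a hKc hKconv hri ha S hS hρ0 hρ hw hdom
end

section
/- Let X and U be normed spaces, h ≥ 1, and for 0 ≤ t ≤ h let A_t : X → X and B_t : U → X be bounded linear operators (A_0 unused). Define G : X^h × U^{h+1} → X^{h+1} by G((y_1,…,y_h),(v_0,…,v_h)) = (−y_1 + B_0 v_0, (−y_{t+1} + A_t y_t + B_t v_t)_{1≤t≤h−1}, A_h y_h + B_h v_h). If the subspace Im(A_h ∘ B_{h−1}) + Im B_h is closed in X and equals Im A_h + Im B_h, and Im A_h + Im B_h is closed, then Im G is closed in X^{h+1}. -/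
/-!
With `v = 0`, the first `h` coordinates of `G (y, v) = w` form a forward recursion
`y₀ = 0, y_{t+1} = A_t y_t - w_t` whose solution `z(w)` depends continuously on `w`.
The last coordinate always satisfies `w_h - A_h x ∈ Im A_h + Im B_h` for every `x`, so
`Im G ⊆ {w | w_h - A_h z_h(w) ∈ Im A_h + Im B_h}`. Conversely, if
`w_h - A_h z_h(w) = A_h B_{h-1} u' + B_h u`, correcting `y_h` by `B_{h-1} u'` and choosing
`v_{h-1} = u'`, `v_h = u` solves `G (y, v) = w`. Under `Im (A_h B_{h-1}) + Im B_h = Im A_h + Im B_h`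
the two sets agree, and the preimage of a closed subspace under a continuous map is closed.
-/

section

variable {R X U : Type*} [Ring R] [AddCommGroup X] [Module R X] [TopologicalSpace X]
  [AddCommGroup U] [Module R U] [TopologicalSpace U]

def constraintMap (h : ℕ) (A : ℕ → X →L[R] X) (B : ℕ → U →L[R] X)
    (p : (ℕ → X) × (ℕ → U)) (t : Fin (h + 1)) : X :=
  if (t : ℕ) = 0 then -(p.1 1) + B 0 (p.2 0)
  else if (t : ℕ) = h then A h (p.1 h) + B h (p.2 h)
  else -(p.1 ((t : ℕ) + 1)) + A t (p.1 t) + B t (p.2 t)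

def freeState (A : ℕ → X →L[R] X) (w : ℕ → X) : ℕ → X
  | 0 => 0
  | t + 1 => A t (freeState A w t) - w t

theorem continuous_freeState [ContinuousSub X] (A : ℕ → X →L[R] X) (t : ℕ) :
    Continuous fun w : ℕ → X => freeState A w t := by
  induction t with
  | zero => exact continuous_const
  | succ t ih => exact ((A t).continuous.comp ih).sub (continuous_apply t)

theorem constraintMap_last {h : ℕ} (hh : h ≠ 0) (A : ℕ → X →L[R] X) (B : ℕ → U →L[R] X)
    (y : ℕ → X) (v : ℕ → U) :
    constraintMap h A B (y, v) (Fin.last h) = A h (y h) + B h (v h) := by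
  simp [constraintMap, hh]

theorem constraintMap_of_lt {h : ℕ} (A : ℕ → X →L[R] X) (B : ℕ → U →L[R] X)
    {y : ℕ → X} (hy : y 0 = 0) (v : ℕ → U) {t : Fin (h + 1)} (ht : (t : ℕ) < h) :
    constraintMap h A B (y, v) t = -(y (t + 1)) + A t (y t) + B t (v t) := by
  by_cases ht0 : (t : ℕ) = 0
  · simp [constraintMap, ht0, hy]
  · simp [constraintMap, ht0, ht.ne]

theorem range_constraintMap_subset {h : ℕ} (hh : h ≠ 0) (A : ℕ → X →L[R] X)
    (B : ℕ → U →L[R] X) (z : (Fin (h + 1) → X) → X) :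
    Set.range (constraintMap h A B) ⊆ {w | w (Fin.last h) - A h (z w) ∈
      LinearMap.range (A h : X →ₗ[R] X) ⊔ LinearMap.range (B h : U →ₗ[R] X)} := by
  rintro _ ⟨⟨y, v⟩, rfl⟩
  rw [Set.mem_ofPred_eq, constraintMap_last hh,
    show A h (y h) + B h (v h) - A h (z _) = A h (y h - z _) + B h (v h) by
      rw [map_sub]; abel]
  exact Submodule.add_mem_sup (LinearMap.mem_range_self _ _) (LinearMap.mem_range_self _ _)

theorem mem_range_constraintMap {h : ℕ} (hh : h ≠ 0) (A : ℕ → X →L[R] X)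
    (B : ℕ → U →L[R] X) (w : Fin (h + 1) → X) (u' u : U)
    (hw : A h (B (h - 1) u') + B h u =
      w (Fin.last h) - A h (freeState A (w ∘ Fin.ofNat (h + 1)) h)) :
    w ∈ Set.range (constraintMap h A B) := by
  set z := freeState A (w ∘ Fin.ofNat (h + 1))
  refine ⟨(z + Pi.single h (B (h - 1) u'), Pi.single (h - 1) u' + Pi.single h u), funext fun t => ?_⟩
  by_cases hth : (t : ℕ) = h
  · obtain rfl : t = Fin.last h := Fin.ext hth
    have hne : h ≠ h - 1 := by omega
    simp only [constraintMap_last hh, Pi.add_apply, Pi.single_eq_same, Pi.single_eq_of_ne hne,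
      map_add, zero_add]
    rw [add_assoc, hw, add_sub_cancel]
  · have ht : (t : ℕ) < h := by omega
    have hy0 : (z + Pi.single h (B (h - 1) u') : ℕ → X) 0 = 0 := by
      simp [z, freeState, Ne.symm hh]
    have hz : z (t + 1) = A t (z t) - w t := by
      simp [z, freeState, Fin.ofNat, Nat.mod_eq_of_lt t.isLt]
    rw [constraintMap_of_lt A B hy0 _ ht]
    simp only [Pi.add_apply, hz, Pi.single_eq_of_ne hth, add_zero]
    by_cases hlast : (t : ℕ) + 1 = h
    · rw [show h - 1 = t by omega, hlast, Pi.single_eq_same, Pi.single_eq_same]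
      abel
    · rw [Pi.single_eq_of_ne hlast, Pi.single_eq_of_ne (by omega : (t : ℕ) ≠ h - 1)]
      simp

end

theorem stmt3_general {X U : Type*} [NormedAddCommGroup X] [NormedSpace ℝ X]
    [NormedAddCommGroup U] [NormedSpace ℝ U]
    (h : ℕ) (hh : 1 ≤ h) (A : ℕ → (X →L[ℝ] X)) (B : ℕ → (U →L[ℝ] X))
    (G : ((ℕ → X) × (ℕ → U)) → (Fin (h + 1) → X))
    (hG : ∀ y : ℕ → X, ∀ v : ℕ → U, ∀ t : Fin (h + 1),
      G (y, v) t =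
        if (t : ℕ) = 0 then -(y 1) + B 0 (v 0)
        else if (t : ℕ) = h then A h (y h) + B h (v h)
        else -(y ((t : ℕ) + 1)) + A t (y t) + B t (v t))
    (heq : (LinearMap.range (((((A h).comp (B (h - 1))) : U →L[ℝ] X)) : U →ₗ[ℝ] X) ⊔
        LinearMap.range ((B h : U →L[ℝ] X) : U →ₗ[ℝ] X) : Submodule ℝ X)
      = (LinearMap.range ((A h : X →L[ℝ] X) : X →ₗ[ℝ] X) ⊔ LinearMap.range ((B h : U →L[ℝ] X) : U →ₗ[ℝ] X)))
    (hclosed2 : IsClosed ((LinearMap.range ((A h : X →L[ℝ] X) : X →ₗ[ℝ] X) ⊔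
        LinearMap.range ((B h : U →L[ℝ] X) : U →ₗ[ℝ] X) : Submodule ℝ X) : Set X)) :
    IsClosed (Set.range G) := by
  have hh0 : h ≠ 0 := Nat.one_le_iff_ne_zero.mp hh
  have hGc : G = constraintMap h A B := funext fun p => funext (hG p.1 p.2)
  let z := fun w : Fin (h + 1) → X => freeState A (w ∘ Fin.ofNat (h + 1)) h
  have hrange : Set.range G = {w | w (Fin.last h) - A h (z w) ∈
      LinearMap.range (A h : X →ₗ[ℝ] X) ⊔ LinearMap.range (B h : U →ₗ[ℝ] X)} := by
    refine hGc ▸ (range_constraintMap_subset hh0 A B z).antisymm fun w hw => ?_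
    rw [Set.mem_ofPred_eq, ← heq] at hw
    obtain ⟨_, ⟨u', rfl⟩, _, ⟨u, rfl⟩, hsum⟩ := Submodule.mem_sup.mp hw
    exact mem_range_constraintMap hh0 A B w u' u hsum
  have hz : Continuous z :=
    (continuous_freeState A h).comp (continuous_pi fun t => continuous_apply _)
  rw [hrange]
  exact hclosed2.preimage ((continuous_apply _).sub ((A h).continuous.comp hz))

theorem stmt3 {X U : Type*} [NormedAddCommGroup X] [NormedSpace ℝ X]
    [NormedAddCommGroup U] [NormedSpace ℝ U]
    (h : ℕ) (hh : 1 ≤ h) (A : ℕ → (X →L[ℝ] X)) (B : ℕ → (U →L[ℝ] X))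
    (G : ((ℕ → X) × (ℕ → U)) → (Fin (h + 1) → X))
    (hG : ∀ y : ℕ → X, ∀ v : ℕ → U, ∀ t : Fin (h + 1),
      G (y, v) t =
        if (t : ℕ) = 0 then -(y 1) + B 0 (v 0)
        else if (t : ℕ) = h then A h (y h) + B h (v h)
        else -(y ((t : ℕ) + 1)) + A t (y t) + B t (v t))
    (hclosed1 : IsClosed ((LinearMap.range (((((A h).comp (B (h - 1))) : U →L[ℝ] X)) : U →ₗ[ℝ] X) ⊔
        LinearMap.range ((B h : U →L[ℝ] X) : U →ₗ[ℝ] X) : Submodule ℝ X) : Set X))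
    (heq : (LinearMap.range (((((A h).comp (B (h - 1))) : U →L[ℝ] X)) : U →ₗ[ℝ] X) ⊔
        LinearMap.range ((B h : U →L[ℝ] X) : U →ₗ[ℝ] X) : Submodule ℝ X)
      = (LinearMap.range ((A h : X →L[ℝ] X) : X →ₗ[ℝ] X) ⊔ LinearMap.range ((B h : U →L[ℝ] X) : U →ₗ[ℝ] X)))
    (hclosed2 : IsClosed ((LinearMap.range ((A h : X →L[ℝ] X) : X →ₗ[ℝ] X) ⊔
        LinearMap.range ((B h : U →L[ℝ] X) : U →ₗ[ℝ] X) : Submodule ℝ X) : Set X)) :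
    IsClosed (Set.range G) :=
  stmt3_general h hh A B G hG heq hclosed2
end

section
/- Let X and U be normed spaces, h ≥ 2, and for 0 ≤ t ≤ h let A_t : X → X and B_t : U → X be bounded linear operators. Define G : X^h × U^{h+1} → X^{h+1} by G((y_1,…,y_h),(v_0,…,v_h)) = (−y_1 + B_0 v_0, (−y_{t+1} + A_t y_t + B_t v_t)_{1≤t≤h−1}, A_h y_h + B_h v_h). If for every t with 2 ≤ t ≤ h the operator (y,v) ↦ A_t y + B_t v is surjective onto X, and Im(A_1 ∘ B_0) + Im B_1 = X, then G is surjective. -/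
/-!
Solve `G (y, v) = c` from the last stage backwards: for `t = h, h - 1, …, 2` the surjectivity of
`(y, v) ↦ A t y + B t v` yields `(y t, v t)` with `A t (y t) + B t (v t) = c t + y (t + 1)`,
where `y (h + 1) = 0`. The equation at `t = 0` forces `y 1 = B 0 (v 0) - c 0`, which turns the
equation at `t = 1` into `A 1 (B 0 (v 0)) + B 1 (v 1) = c 1 + y 2 + A 1 (c 0)`, solvable by the
hypothesis on `A 1 ∘ B 0` and `B 1`.
-/

section Staircase

variable {X U : Type*}

theorem exists_staircase_tail_solution [AddZeroClass X] [Zero U] (A : ℕ → X → X) (B : ℕ → U → X)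
    (c : ℕ → X) {h s : ℕ} (hs : s ≤ h + 1)
    (hsurj : ∀ t, s ≤ t → t ≤ h → ∀ x, ∃ y v, A t y + B t v = x) :
    ∃ (y : ℕ → X) (v : ℕ → U), y (h + 1) = 0 ∧
      ∀ t, s ≤ t → t ≤ h → A t (y t) + B t (v t) = c t + y (t + 1) := by
  induction hs using Nat.decreasingInduction with
  | self => exact ⟨0, 0, rfl, fun t hst hth => by omega⟩
  | of_succ s hs ih =>
    obtain ⟨y, v, hy_last, hy⟩ := ih fun t hst hth => hsurj t (by omega) hth
    obtain ⟨a, b, hab⟩ := hsurj s le_rfl (by omega) (c s + y (s + 1))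
    refine ⟨Function.update y s a, Function.update v s b, ?_, fun t hst hth => ?_⟩
    · rwa [Function.update_of_ne (by omega)]
    rcases hst.eq_or_lt with rfl | hlt
    · simpa [Function.update_of_ne (Nat.succ_ne_self s)] using hab
    · simpa [Function.update_of_ne hlt.ne', Function.update_of_ne (by omega : t + 1 ≠ s)]
        using hy t hlt hth

theorem exists_staircase_solution [AddCommGroup X] [Zero U] (A : ℕ → X →+ X) (B : ℕ → U → X)
    (c : ℕ → X) {h : ℕ} (hh : 1 ≤ h)
    (hsurj : ∀ t, 2 ≤ t → t ≤ h → ∀ x, ∃ y v, A t y + B t v = x)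
    (h10 : ∀ x, ∃ v0 v1, A 1 (B 0 v0) + B 1 v1 = x) :
    ∃ (y : ℕ → X) (v : ℕ → U), -y 1 + B 0 (v 0) = c 0 ∧ y (h + 1) = 0 ∧
      ∀ t, 1 ≤ t → t ≤ h → A t (y t) + B t (v t) = c t + y (t + 1) := by
  obtain ⟨y, v, hy_last, hy⟩ :=
    exists_staircase_tail_solution (fun t => A t) B c (by omega : 2 ≤ h + 1) hsurj
  obtain ⟨v0, v1, hv⟩ := h10 (c 1 + y 2 + A 1 (c 0))
  refine ⟨Function.update y 1 (B 0 v0 - c 0),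
    Function.update (Function.update v 0 v0) 1 v1, ?_, ?_, fun t h1t hth => ?_⟩
  · simp
  · rwa [Function.update_of_ne (by omega)]
  rcases h1t.eq_or_lt with rfl | hlt
  · simp only [Function.update_self, Function.update_of_ne (by omega : 1 + 1 ≠ 1), map_sub]
    rw [sub_add_eq_add_sub, hv, add_sub_cancel_right]
  · simpa [Function.update_of_ne hlt.ne', Function.update_of_ne (by omega : t + 1 ≠ 1),
      Function.update_of_ne (by omega : t ≠ 0)] using hy t hlt hth

end Staircase

theorem stmt4 {X U : Type*} [NormedAddCommGroup X] [NormedSpace ℝ X]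
    [NormedAddCommGroup U] [NormedSpace ℝ U]
    (h : ℕ) (hh : 2 ≤ h) (A : ℕ → (X →L[ℝ] X)) (B : ℕ → (U →L[ℝ] X))
    (G : ((ℕ → X) × (ℕ → U)) → (Fin (h + 1) → X))
    (hG : ∀ y : ℕ → X, ∀ v : ℕ → U, ∀ t : Fin (h + 1),
      G (y, v) t =
        if (t : ℕ) = 0 then -(y 1) + B 0 (v 0)
        else if (t : ℕ) = h then A h (y h) + B h (v h)
        else -(y ((t : ℕ) + 1)) + A t (y t) + B t (v t))
    (hsurj : ∀ t : ℕ, 2 ≤ t → t ≤ h → ∀ x : X, ∃ y : X, ∃ v : U, A t y + B t v = x)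
    (h10 : ∀ x : X, ∃ v0 v1 : U, A 1 (B 0 v0) + B 1 v1 = x) :
    Function.Surjective G := by
  intro c
  obtain ⟨y, v, h_first, h_last, h_stage⟩ :=
    exists_staircase_solution (fun t => (A t : X →+ X)) (fun t => B t)
      (fun n => c (Fin.ofNat (h + 1) n)) (by omega : 1 ≤ h) hsurj h10
  simp only [AddMonoidHom.coe_coe] at h_stage
  refine ⟨(y, v), funext fun t => ?_⟩
  rw [hG]
  split_ifs with ht0 hth
  · rw [← Fin.ofNat_val_eq_self t, ht0]
    exact h_first
  · rw [← Fin.ofNat_val_eq_self t, hth]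
    simpa [h_last] using h_stage h (by omega) le_rfl
  · rw [add_assoc, h_stage t (by omega) (by omega), Fin.ofNat_val_eq_self]
    abel
end

section
/- Let ((x̂_t),(û_t)) be an optimal process for one of the infinite-horizon problems P_1(σ), P_2(σ), or P_3(σ). Then for every h ≥ 1, the truncation (x̂_1,…,x̂_h, û_0,…,û_h) is an optimal solution of the finite-horizon problem F_h(σ): maximize Σ_{t=0}^h φ_t(x_t,u_t) over (x_t)_{1≤t≤h} ∈ Π X_t, (u_t)_{0≤t≤h} ∈ Π U_t subject to x_{t+1} = f_t(x_t,u_t) for 0 ≤ t ≤ h, with x_0 = σ and x_{h+1} = x̂_{h+1}. -/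
/-
Take a competitor for the finite-horizon problem that ends at `x̂_{h+1}` and continue it after
time `h` by the optimal process itself. The result is admissible for the infinite-horizon
problem, and for every horizon `m ≥ h` its gap to the optimal process,
`∑_{t ≤ m} (φ_t(x̂_t, û_t) - φ_t(x_t, u_t))`, equals the finite-horizon gap `C`.
Each of the three optimality notions forces this eventually constant gap to be `≥ 0`.
-/

open Filter Finset

/-- Admissibility of an infinite-horizon process from initial state `σ`. -/
def IsAdmissible {X U : Type*} (Xs : ℕ → Set X) (Us : ℕ → Set U)
    (f : ℕ → X → U → X) (σ : X) (x : ℕ → X) (u : ℕ → U) : Prop :=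
  x 0 = σ ∧ (∀ t, x t ∈ Xs t) ∧ (∀ t, u t ∈ Us t) ∧ ∀ t, x (t + 1) = f t (x t) (u t)

def splice {α : Type*} (h : ℕ) (x y : ℕ → α) : ℕ → α := fun t => if t ≤ h then x t else y t

lemma splice_of_le {α : Type*} {h t : ℕ} (x y : ℕ → α) (ht : t ≤ h) : splice h x y t = x t :=
  if_pos ht

lemma splice_of_lt {α : Type*} {h t : ℕ} (x y : ℕ → α) (ht : h < t) : splice h x y t = y t :=
  if_neg (Nat.not_le.mpr ht)

section Splicing

variable {X U : Type*} {Xs : ℕ → Set X} {Us : ℕ → Set U} {f : ℕ → X → U → X} {σ : X}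
  {xh x : ℕ → X} {uh u : ℕ → U} {h : ℕ}

lemma IsAdmissible.splice (hadm : IsAdmissible Xs Us f σ xh uh) (hx0 : x 0 = σ)
    (hxmem : ∀ t, 1 ≤ t → t ≤ h → x t ∈ Xs t) (humem : ∀ t, t ≤ h → u t ∈ Us t)
    (hdyn : ∀ t, t ≤ h → x (t + 1) = f t (x t) (u t)) (hend : x (h + 1) = xh (h + 1)) :
    IsAdmissible Xs Us f σ (splice h x xh) (splice h u uh) := by
  obtain ⟨hxh0, hxhmem, huhmem, hxhdyn⟩ := hadm
  refine ⟨by rwa [splice_of_le _ _ (Nat.zero_le h)], fun t => ?_, fun t => ?_, fun t => ?_⟩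
  · rcases le_or_gt t h with ht | ht
    · rw [splice_of_le _ _ ht]
      rcases Nat.eq_zero_or_pos t with rfl | hpos
      · exact hx0 ▸ hxh0 ▸ hxhmem 0
      · exact hxmem t hpos ht
    · rw [splice_of_lt _ _ ht]
      exact hxhmem t
  · rcases le_or_gt t h with ht | ht
    · rw [splice_of_le _ _ ht]
      exact humem t ht
    · rw [splice_of_lt _ _ ht]
      exact huhmem t
  · rcases lt_trichotomy t h with ht | rfl | ht
    · rw [splice_of_le _ _ ht, splice_of_le _ _ ht.le, splice_of_le _ _ ht.le]
      exact hdyn t ht.le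
    · rw [splice_of_lt _ _ (Nat.lt_succ_self t), splice_of_le _ _ le_rfl,
        splice_of_le _ _ le_rfl, ← hend]
      exact hdyn t le_rfl
    · rw [splice_of_lt _ _ (Nat.lt_succ_of_lt ht), splice_of_lt _ _ ht, splice_of_lt _ _ ht]
      exact hxhdyn t

lemma sum_sub_splice_eventually_eq (φ : ℕ → X → U → ℝ) :
    (fun m => ∑ t ∈ range (m + 1),
        (φ t (xh t) (uh t) - φ t (splice h x xh t) (splice h u uh t))) =ᶠ[atTop]
      fun _ => ∑ t ∈ range (h + 1), (φ t (xh t) (uh t) - φ t (x t) (u t)) := by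
  filter_upwards [eventually_ge_atTop h] with m hm
  rw [eventually_constant_sum (N := h + 1) (fun t ht => ?_) (by omega)]
  · refine sum_congr rfl fun t ht => ?_
    have ht : t ≤ h := Nat.lt_succ_iff.mp (mem_range.mp ht)
    rw [splice_of_le _ _ ht, splice_of_le _ _ ht]
  · rw [splice_of_lt _ _ ht, splice_of_lt _ _ ht, sub_self]

end Splicing

section EventuallyConstantGap

variable {α : Type*} {l : Filter α} {s : α → ℝ} {C : ℝ}

lemma nonneg_of_le_limsup_of_eventuallyEq [l.NeBot]
    (hs : (0 : EReal) ≤ limsup (fun a => (s a : EReal)) l)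
    (hC : s =ᶠ[l] fun _ => C) : 0 ≤ C := by
  rwa [limsup_congr (hC.mono fun a ha => by rw [ha]), limsup_const, EReal.coe_nonneg] at hs

lemma nonneg_of_le_liminf_of_eventuallyEq [l.NeBot]
    (hs : (0 : EReal) ≤ liminf (fun a => (s a : EReal)) l)
    (hC : s =ᶠ[l] fun _ => C) : 0 ≤ C := by
  rwa [liminf_congr (hC.mono fun a ha => by rw [ha]), liminf_const, EReal.coe_nonneg] at hs

lemma nonneg_of_tendsto_of_forall_tendsto_le {sh : α → ℝ} {lh : ℝ}
    (hsh : Tendsto sh l (nhds lh)) (hmax : ∀ ls, Tendsto s l (nhds ls) → ls ≤ lh)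
    (hC : (fun a => sh a - s a) =ᶠ[l] fun _ => C) : 0 ≤ C := by
  have hs : Tendsto s l (nhds (lh - C)) :=
    (hsh.sub_const C).congr' (hC.mono fun a ha => by simp only at ha ⊢; linarith)
  linarith [hmax _ hs]

end EventuallyConstantGap

theorem stmt6_general {X U : Type*}
    (Xs : ℕ → Set X) (Us : ℕ → Set U)
    (f : ℕ → X → U → X) (φ : ℕ → X → U → ℝ) (σ : X)
    (xh : ℕ → X) (uh : ℕ → U)
    (hadm : IsAdmissible Xs Us f σ xh uh)
    (hopt :
      -- optimality for P₁(σ)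
      ((∃ l : ℝ, Tendsto (fun h => ∑ t ∈ range (h + 1), φ t (xh t) (uh t)) atTop (nhds l)) ∧
        ∀ x u, IsAdmissible Xs Us f σ x u →
          ∀ l lh : ℝ,
            Tendsto (fun h => ∑ t ∈ range (h + 1), φ t (x t) (u t)) atTop (nhds l) →
            Tendsto (fun h => ∑ t ∈ range (h + 1), φ t (xh t) (uh t)) atTop (nhds lh) →
            l ≤ lh)
      -- optimality for P₂(σ)
      ∨ (∀ x u, IsAdmissible Xs Us f σ x u →
          (0 : EReal) ≤ Filter.limsup
            (fun h => ((∑ t ∈ range (h + 1),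
              (φ t (xh t) (uh t) - φ t (x t) (u t)) : ℝ) : EReal)) atTop)
      -- optimality for P₃(σ)
      ∨ (∀ x u, IsAdmissible Xs Us f σ x u →
          (0 : EReal) ≤ Filter.liminf
            (fun h => ((∑ t ∈ range (h + 1),
              (φ t (xh t) (uh t) - φ t (x t) (u t)) : ℝ) : EReal)) atTop)) :
    ∀ h : ℕ, 1 ≤ h → ∀ x : ℕ → X, ∀ u : ℕ → U,
      x 0 = σ →
      (∀ t, 1 ≤ t → t ≤ h → x t ∈ Xs t) →
      (∀ t, t ≤ h → u t ∈ Us t) →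
      (∀ t, t ≤ h → x (t + 1) = f t (x t) (u t)) →
      x (h + 1) = xh (h + 1) →
      ∑ t ∈ range (h + 1), φ t (x t) (u t) ≤ ∑ t ∈ range (h + 1), φ t (xh t) (uh t) := by
  intro h _ x u hx0 hxmem humem hdyn hend
  have hspliced := hadm.splice hx0 hxmem humem hdyn hend
  have hgap := sum_sub_splice_eventually_eq (x := x) (u := u) (h := h) (xh := xh) (uh := uh) φ
  suffices 0 ≤ ∑ t ∈ range (h + 1), (φ t (xh t) (uh t) - φ t (x t) (u t)) by
    rwa [sum_sub_distrib, sub_nonneg] at this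
  rcases hopt with ⟨⟨lh, hlh⟩, hmax⟩ | hsup | hinf
  · exact nonneg_of_tendsto_of_forall_tendsto_le hlh
      (fun ls hls => hmax _ _ hspliced ls lh hls hlh)
      (hgap.mono fun _ hm => (sum_sub_distrib ..).symm.trans hm)
  · exact nonneg_of_le_limsup_of_eventuallyEq (hsup _ _ hspliced) hgap
  · exact nonneg_of_le_liminf_of_eventuallyEq (hinf _ _ hspliced) hgap

theorem stmt6 {X U : Type*} [NormedAddCommGroup X] [NormedSpace ℝ X] [CompleteSpace X]
    [NormedAddCommGroup U] [NormedSpace ℝ U] [CompleteSpace U]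
    (Xs : ℕ → Set X) (Us : ℕ → Set U) (hX : ∀ t, IsOpen (Xs t))
    (f : ℕ → X → U → X) (φ : ℕ → X → U → ℝ) (σ : X)
    (xh : ℕ → X) (uh : ℕ → U)
    (hadm : IsAdmissible Xs Us f σ xh uh)
    (hopt :
      -- optimality for P₁(σ)
      ((∃ l : ℝ, Tendsto (fun h => ∑ t ∈ range (h + 1), φ t (xh t) (uh t)) atTop (nhds l)) ∧
        ∀ x u, IsAdmissible Xs Us f σ x u →
          ∀ l lh : ℝ,
            Tendsto (fun h => ∑ t ∈ range (h + 1), φ t (x t) (u t)) atTop (nhds l) →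
            Tendsto (fun h => ∑ t ∈ range (h + 1), φ t (xh t) (uh t)) atTop (nhds lh) →
            l ≤ lh)
      -- optimality for P₂(σ)
      ∨ (∀ x u, IsAdmissible Xs Us f σ x u →
          (0 : EReal) ≤ Filter.limsup
            (fun h => ((∑ t ∈ range (h + 1),
              (φ t (xh t) (uh t) - φ t (x t) (u t)) : ℝ) : EReal)) atTop)
      -- optimality for P₃(σ)
      ∨ (∀ x u, IsAdmissible Xs Us f σ x u →
          (0 : EReal) ≤ Filter.liminf
            (fun h => ((∑ t ∈ range (h + 1),
              (φ t (xh t) (uh t) - φ t (x t) (u t)) : ℝ) : EReal)) atTop)) :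
    ∀ h : ℕ, 1 ≤ h → ∀ x : ℕ → X, ∀ u : ℕ → U,
      x 0 = σ →
      (∀ t, 1 ≤ t → t ≤ h → x t ∈ Xs t) →
      (∀ t, t ≤ h → u t ∈ Us t) →
      (∀ t, t ≤ h → x (t + 1) = f t (x t) (u t)) →
      x (h + 1) = xh (h + 1) →
      ∑ t ∈ range (h + 1), φ t (x t) (u t) ≤ ∑ t ∈ range (h + 1), φ t (xh t) (uh t) :=
  stmt6_general Xs Us f φ σ xh uh hadm hopt
end
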